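/- If the pairing ⟨·,·⟩ : W ⊗ W → K is skew-symmetric, then the Hamiltonian flow Ham : |T(W)| → Der_K(T(W)) is a Lie algebra homomorphism, where |T(W)| carries the necklace Lie bracket induced by the pairing. -/

import Mathlib

noncomputable def wordProd {K W : Type*} [Field K] [AddCommGroup W] [Module K W]
    (l : List W) : TensorAlgebra K W :=
  (l.map (TensorAlgebra.ι K)).prod

noncomputable def hamApply {K W : Type*} [Field K] [AddCommGroup W] [Module K W]
    (p : W →ₗ[K] W →ₗ[K] K) (u w : List W) : TensorAlgebra K W :=
  ∑ i ∈ Finset.range u.length, ∑ j ∈ Finset.range w.length,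
    p (u.getD i 0) (w.getD j 0) •
      wordProd (w.take j ++ u.drop (i + 1) ++ u.take i ++ w.drop (j + 1))

/-!
Applied to a word `w`, both `Ham(u) ∘ Ham(v)` and `Ham(v) ∘ Ham(u)` are sums of two successive
contractions. The terms in which both contractions hit letters of `w` cancel between the two
composites: contracting `u` with `w_m` and `v` with `w_L` gives the same word in either order.
In the remaining terms the second contraction hits a letter of the word inserted by the first;
splitting `Ham({u,v}) w` according to the segment of the necklace `v_{<j} u_{>i} u_{<i} v_{>j}`
that contracts with `w`, these are its four pieces, those coming from `Ham(v) ∘ Ham(u)` after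
the sign change of skew-symmetry.
-/

open Finset

theorem sum_range_sum_range_eq_sum_range_sum_range_sub {M : Type*} [AddCommMonoid M] (N : ℕ)
    (f : ℕ → ℕ → M) :
    ∑ a ∈ range N, ∑ b ∈ range a, f a b =
      ∑ b ∈ range N, ∑ k ∈ range (N - (b + 1)), f (b + 1 + k) b := by
  rw [sum_comm' (t' := range N) (s' := fun b => Ico (b + 1) N)
    (fun a b => by simp only [mem_range, mem_Ico]; omega)]
  simp_rw [sum_Ico_eq_sum_range]

namespace List

variable {α : Type*}

/-- The word `w_{<j} u_{>i} u_{<i} w_{>j}`: the `j`-th letter of `w` replaced by the necklace `u`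
opened at its `i`-th letter. -/
def splice (u : List α) (i : ℕ) (w : List α) (j : ℕ) : List α :=
  w.take j ++ u.drop (i + 1) ++ u.take i ++ w.drop (j + 1)

theorem getD_take_of_lt {w : List α} {l m : ℕ} (d : α) (h : m < l) :
    (w.take l).getD m d = w.getD m d := by
  simp [getD_eq_getElem?_getD, h]

theorem getD_drop (w : List α) (l m : ℕ) (d : α) :
    (w.drop l).getD m d = w.getD (l + m) d := by
  simp [getD_eq_getElem?_getD]

theorem splice_at_append_of_lt (u a b : List α) (i : ℕ) {m : ℕ} (hm : m < a.length) :
    splice u i (a ++ b) m = splice u i a m ++ b := by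
  simp [splice, take_append, drop_append, Nat.sub_eq_zero_of_le hm.le,
    Nat.sub_eq_zero_of_le (Nat.succ_le_of_lt hm)]

theorem splice_at_append_length_add (u a b : List α) (i m : ℕ) :
    splice u i (a ++ b) (a.length + m) = a ++ splice u i b m := by
  simp [splice, Nat.add_assoc, take_length_add_append, drop_length_add_append]

theorem splice_append_length_add (a c w : List α) {k : ℕ} (hk : k < c.length) (l : ℕ) :
    splice (a ++ c) (a.length + k) w l = splice (c ++ a) k w l := by
  simp [splice, Nat.add_assoc, drop_append, take_append, drop_eq_nil_of_le,
    take_of_length_le, Nat.sub_eq_zero_of_le (Nat.succ_le_of_lt hk), Nat.sub_eq_zero_of_le hk.le]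

theorem splice_append_of_lt_length (a r w : List α) {k : ℕ} (hk : k < a.length) (l : ℕ) :
    splice (a ++ r) k w l = w.take l ++ a.drop (k + 1) ++ r ++ a.take k ++ w.drop (l + 1) := by
  simp [splice, drop_append, take_append, Nat.sub_eq_zero_of_le hk.le,
    Nat.sub_eq_zero_of_le (Nat.succ_le_of_lt hk)]

end List

section PairSum

variable {K W M : Type*} [CommSemiring K] [AddCommMonoid W] [Module K W] [AddCommMonoid M]
  [Module K M]

def pairSum (p : W →ₗ[K] W →ₗ[K] K) (u w : List W) (F : ℕ → ℕ → M) : M :=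
  ∑ i ∈ range u.length, ∑ j ∈ range w.length, p (u.getD i 0) (w.getD j 0) • F i j

variable (p : W →ₗ[K] W →ₗ[K] K)

theorem pairSum_congr {u w : List W} {F G : ℕ → ℕ → M}
    (h : ∀ i < u.length, ∀ j < w.length, F i j = G i j) : pairSum p u w F = pairSum p u w G :=
  sum_congr rfl fun i hi => sum_congr rfl fun j hj => by
    rw [h i (mem_range.1 hi) j (mem_range.1 hj)]

theorem pairSum_add (u w : List W) (F G : ℕ → ℕ → M) :
    pairSum p u w (fun i j => F i j + G i j) = pairSum p u w F + pairSum p u w G := by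
  simp only [pairSum, smul_add, sum_add_distrib]

theorem map_pairSum {N : Type*} [AddCommMonoid N] [Module K N] (f : M →ₗ[K] N) (u w : List W)
    (F : ℕ → ℕ → M) : f (pairSum p u w F) = pairSum p u w fun i j => f (F i j) := by
  simp only [pairSum, map_sum, map_smul]

theorem pairSum_append_left (a b w : List W) (F : ℕ → ℕ → M) :
    pairSum p (a ++ b) w F = pairSum p a w F + pairSum p b w fun k l => F (a.length + k) l := by
  rw [pairSum, List.length_append, sum_range_add]
  congr 1
  · refine sum_congr rfl fun k hk => ?_
    rw [List.getD_append _ _ _ _ (mem_range.1 hk)]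
  · simp only [List.getD_append_right _ _ _ _ (Nat.le_add_right _ _), Nat.add_sub_cancel_left]
    rfl

theorem pairSum_append_right (u a b : List W) (F : ℕ → ℕ → M) :
    pairSum p u (a ++ b) F = pairSum p u a F + pairSum p u b fun i m => F i (a.length + m) := by
  simp only [pairSum, ← sum_add_distrib]
  refine sum_congr rfl fun i _ => ?_
  rw [List.length_append, sum_range_add]
  congr 1
  · refine sum_congr rfl fun m hm => ?_
    rw [List.getD_append _ _ _ _ (mem_range.1 hm)]
  · simp only [List.getD_append_right _ _ _ _ (Nat.le_add_right _ _), Nat.add_sub_cancel_left]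

end PairSum

theorem pairSum_swap {K W M : Type*} [CommRing K] [AddCommMonoid W] [Module K W]
    [AddCommGroup M] [Module K M] {p : W →ₗ[K] W →ₗ[K] K} (hskew : ∀ x y, p x y = -p y x)
    (u v : List W) (F : ℕ → ℕ → M) :
    pairSum p u v F = -pairSum p v u fun j i => F i j := by
  rw [pairSum, pairSum, sum_comm, ← sum_neg_distrib]
  refine sum_congr rfl fun j _ => ?_
  rw [← sum_neg_distrib]
  refine sum_congr rfl fun i _ => ?_
  rw [hskew, neg_smul]

section Words

variable {K W : Type*} [Field K] [AddCommGroup W] [Module K W]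

theorem wordProd_append (a b : List W) :
    wordProd (K := K) (a ++ b) = wordProd a * wordProd b := by
  simp [wordProd]

theorem span_range_wordProd : Submodule.span K (Set.range (wordProd (K := K) (W := W))) = ⊤ := by
  rw [eq_top_iff, ← Algebra.top_toSubmodule, ← TensorAlgebra.adjoin_range_ι,
    Algebra.adjoin_eq_span]
  refine Submodule.span_mono fun x hx => ?_
  induction hx using Submonoid.closure_induction with
  | mem _ hx =>
    obtain ⟨a, rfl⟩ := hx
    exact ⟨[a], by simp [wordProd]⟩
  | one => exact ⟨[], by simp [wordProd]⟩
  | mul _ _ _ _ hx hy =>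
    obtain ⟨a, rfl⟩ := hx
    obtain ⟨b, rfl⟩ := hy
    exact ⟨a ++ b, wordProd_append a b⟩

end Words

section Hamiltonian

variable {K W : Type*} [Field K] [AddCommGroup W] [Module K W] (p : W →ₗ[K] W →ₗ[K] K)

/-- The part of `hamApply p u (x ++ a ++ y)` in which `u` pairs with a letter of `a`. -/
noncomputable def hamApplyAt (u x a y : List W) : TensorAlgebra K W :=
  pairSum p u a fun i m => wordProd (x ++ u.splice i a m ++ y)

/-- The part of `hamApply p (a ++ r) w` in which a letter of `a` pairs with `w`. -/
noncomputable def hamApplyVia (a r w : List W) : TensorAlgebra K W :=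
  pairSum p a w fun k l => wordProd ((a ++ r).splice k w l)

theorem hamApply_eq_pairSum (u w : List W) :
    hamApply p u w = pairSum p u w fun i j => wordProd (u.splice i w j) :=
  rfl

theorem hamApplyAt_append (u x a b y : List W) :
    hamApplyAt p u x (a ++ b) y = hamApplyAt p u x a (b ++ y) + hamApplyAt p u (x ++ a) b y := by
  rw [hamApplyAt, pairSum_append_right]
  congr 1
  · refine pairSum_congr p fun _ _ m hm => ?_
    simp [List.splice_at_append_of_lt _ _ _ _ hm]
  · refine pairSum_congr p fun _ _ _ _ => ?_
    simp [List.splice_at_append_length_add]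

theorem hamApplyVia_append (a b r w : List W) :
    hamApplyVia p (a ++ b) r w = hamApplyVia p a (b ++ r) w + hamApplyVia p b (r ++ a) w := by
  rw [hamApplyVia, pairSum_append_left]
  congr 1
  · simp only [hamApplyVia, List.append_assoc]
  · refine pairSum_congr p fun _ hk _ _ => ?_
    rw [List.append_assoc, List.splice_append_length_add _ _ _
      (by simp only [List.length_append]; omega), List.append_assoc]

theorem hamApply_splice_eq_hamApplyAt (u v w : List W) (j l : ℕ) :
    hamApply p u (v.splice j w l) =
      hamApplyAt p u [] (w.take l) (v.drop (j + 1) ++ v.take j ++ w.drop (l + 1)) +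
      hamApplyAt p u (w.take l) (v.drop (j + 1)) (v.take j ++ w.drop (l + 1)) +
      hamApplyAt p u (w.take l ++ v.drop (j + 1)) (v.take j) (w.drop (l + 1)) +
      hamApplyAt p u (w.take l ++ v.drop (j + 1) ++ v.take j) (w.drop (l + 1)) [] := by
  have h : hamApply p u (v.splice j w l) = hamApplyAt p u [] (v.splice j w l) [] := by
    simp only [hamApply_eq_pairSum, hamApplyAt, List.nil_append, List.append_nil]
  rw [h, List.splice, hamApplyAt_append, hamApplyAt_append, hamApplyAt_append]
  simp only [List.append_nil, List.nil_append, List.append_assoc, add_assoc]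

theorem hamApply_splice_eq_hamApplyVia (u v w : List W) (i j : ℕ) :
    hamApply p (u.splice i v j) w =
      hamApplyVia p (v.take j) (u.drop (i + 1) ++ u.take i ++ v.drop (j + 1)) w +
      hamApplyVia p (u.drop (i + 1)) (u.take i ++ v.drop (j + 1) ++ v.take j) w +
      hamApplyVia p (u.take i) (v.drop (j + 1) ++ v.take j ++ u.drop (i + 1)) w +
      hamApplyVia p (v.drop (j + 1)) (v.take j ++ u.drop (i + 1) ++ u.take i) w := by
  have h : hamApply p (u.splice i v j) w = hamApplyVia p (u.splice i v j) [] w := by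
    simp only [hamApply_eq_pairSum, hamApplyVia, List.append_nil]
  rw [h, List.splice, hamApplyVia_append, hamApplyVia_append, hamApplyVia_append]
  simp only [List.append_nil, List.nil_append, List.append_assoc, add_assoc]

theorem pairSum_hamApplyAt_take_eq_pairSum_hamApplyAt_drop (u v w : List W) :
    (pairSum p v w fun j l =>
      hamApplyAt p u [] (w.take l) (v.drop (j + 1) ++ v.take j ++ w.drop (l + 1))) =
    pairSum p u w fun i l =>
      hamApplyAt p v (w.take l ++ u.drop (i + 1) ++ u.take i) (w.drop (l + 1)) [] := by
  trans ∑ L ∈ range w.length, ∑ m ∈ range L,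
      ∑ i ∈ range u.length, ∑ j ∈ range v.length,
      (p (u.getD i 0) (w.getD m 0) * p (v.getD j 0) (w.getD L 0)) •
        wordProd (w.take m ++ u.drop (i + 1) ++ u.take i ++ (w.take L).drop (m + 1) ++
          v.drop (j + 1) ++ v.take j ++ w.drop (L + 1))
  · simp only [pairSum, hamApplyAt, List.splice, smul_sum, smul_smul]
    rw [sum_comm]
    refine sum_congr rfl fun L hL => ?_
    rw [List.length_take, min_eq_left (mem_range.1 hL).le, sum_comm_cycle]
    refine sum_congr rfl fun m hm => ?_
    rw [sum_comm]
    refine sum_congr rfl fun _ _ => sum_congr rfl fun _ _ => ?_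
    rw [List.getD_take_of_lt _ (mem_range.1 hm), mul_comm, List.take_take,
      min_eq_left (mem_range.1 hm).le]
    simp only [List.nil_append, List.append_assoc]
  · simp only [pairSum, hamApplyAt, List.splice, smul_sum, smul_smul, List.length_drop]
    rw [sum_range_sum_range_eq_sum_range_sum_range_sub, sum_comm]
    refine sum_congr rfl fun _ _ => ?_
    rw [sum_comm]
    refine sum_congr rfl fun _ _ => ?_
    rw [sum_comm]
    refine sum_congr rfl fun _ _ => sum_congr rfl fun _ _ => ?_
    rw [List.getD_drop, List.drop_take, Nat.add_sub_cancel_left, List.drop_drop]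
    simp only [List.append_nil, List.append_assoc, Nat.add_assoc]

theorem pairSum_hamApplyAt_drop_eq_pairSum_hamApplyVia_take (u v w : List W) :
    (pairSum p v w fun j l =>
      hamApplyAt p u (w.take l) (v.drop (j + 1)) (v.take j ++ w.drop (l + 1))) =
    pairSum p u v fun i j =>
      hamApplyVia p (v.take j) (u.drop (i + 1) ++ u.take i ++ v.drop (j + 1)) w := by
  trans ∑ j ∈ range v.length, ∑ k ∈ range j,
      ∑ i ∈ range u.length, ∑ l ∈ range w.length,
      (p (u.getD i 0) (v.getD j 0) * p (v.getD k 0) (w.getD l 0)) •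
        wordProd (w.take l ++ (v.take j).drop (k + 1) ++ u.drop (i + 1) ++ u.take i ++
          v.drop (j + 1) ++ v.take k ++ w.drop (l + 1))
  · simp only [pairSum, hamApplyAt, List.splice, smul_sum, smul_smul, List.length_drop]
    rw [sum_range_sum_range_eq_sum_range_sum_range_sub]
    refine sum_congr rfl fun _ _ => ?_
    rw [sum_comm_cycle]
    refine sum_congr rfl fun _ _ => ?_
    rw [sum_comm]
    refine sum_congr rfl fun _ _ => sum_congr rfl fun _ _ => ?_
    rw [List.getD_drop, mul_comm, List.drop_take, Nat.add_sub_cancel_left, List.drop_drop]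
    simp only [List.append_assoc, Nat.add_assoc]
  · symm
    simp only [pairSum, hamApplyVia, smul_sum, smul_smul]
    rw [sum_comm]
    refine sum_congr rfl fun j hj => ?_
    rw [List.length_take, min_eq_left (mem_range.1 hj).le, sum_comm]
    refine sum_congr rfl fun k hk => sum_congr rfl fun _ _ => sum_congr rfl fun _ _ => ?_
    have hk' : k < (v.take j).length := by simpa [(mem_range.1 hj).le] using hk
    rw [List.getD_take_of_lt _ (mem_range.1 hk), List.splice_append_of_lt_length _ _ _ hk',
      List.take_take, min_eq_left (mem_range.1 hk).le]
    simp only [List.append_assoc]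

theorem pairSum_hamApplyAt_take_eq_pairSum_hamApplyVia_drop (u v w : List W) :
    (pairSum p v w fun j l =>
      hamApplyAt p u (w.take l ++ v.drop (j + 1)) (v.take j) (w.drop (l + 1))) =
    pairSum p u v fun i j =>
      hamApplyVia p (v.drop (j + 1)) (v.take j ++ u.drop (i + 1) ++ u.take i) w := by
  trans ∑ j ∈ range v.length, ∑ m ∈ range j,
      ∑ i ∈ range u.length, ∑ l ∈ range w.length,
      (p (u.getD i 0) (v.getD m 0) * p (v.getD j 0) (w.getD l 0)) •
        wordProd (w.take l ++ v.drop (j + 1) ++ v.take m ++ u.drop (i + 1) ++ u.take i ++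
          (v.take j).drop (m + 1) ++ w.drop (l + 1))
  · simp only [pairSum, hamApplyAt, List.splice, smul_sum, smul_smul]
    refine sum_congr rfl fun j hj => ?_
    rw [List.length_take, min_eq_left (mem_range.1 hj).le, sum_comm_cycle]
    refine sum_congr rfl fun m hm => ?_
    rw [sum_comm]
    refine sum_congr rfl fun _ _ => sum_congr rfl fun _ _ => ?_
    rw [List.getD_take_of_lt _ (mem_range.1 hm), mul_comm, List.take_take,
      min_eq_left (mem_range.1 hm).le]
    simp only [List.append_assoc]
  · symm
    simp only [pairSum, hamApplyVia, smul_sum, smul_smul, List.length_drop]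
    rw [sum_comm, sum_range_sum_range_eq_sum_range_sum_range_sub]
    refine sum_congr rfl fun m _ => ?_
    rw [sum_comm]
    refine sum_congr rfl fun k hk =>
      sum_congr rfl fun _ _ => sum_congr rfl fun _ _ => ?_
    have hk' : k < (v.drop (m + 1)).length := by simpa using hk
    rw [List.getD_drop, List.splice_append_of_lt_length _ _ _ hk', List.drop_take,
      Nat.add_sub_cancel_left, List.drop_drop]
    simp only [List.append_assoc, Nat.add_assoc]

end Hamiltonian

section LieHom

variable {K W : Type*} [Field K] [AddCommGroup W] [Module K W] {p : W →ₗ[K] W →ₗ[K] K}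

theorem pairSum_hamApply_splice_sub (hskew : ∀ x y, p x y = -p y x) (u v w : List W) :
    ((pairSum p v w fun j l => hamApply p u (v.splice j w l)) -
      pairSum p u w fun i l => hamApply p v (u.splice i w l)) =
    pairSum p u v fun i j => hamApply p (u.splice i v j) w := by
  simp only [hamApply_splice_eq_hamApplyAt, hamApply_splice_eq_hamApplyVia, pairSum_add]
  rw [pairSum_hamApplyAt_take_eq_pairSum_hamApplyAt_drop p u v w,
    pairSum_hamApplyAt_take_eq_pairSum_hamApplyAt_drop p v u w,
    pairSum_hamApplyAt_drop_eq_pairSum_hamApplyVia_take p u v w,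
    pairSum_hamApplyAt_drop_eq_pairSum_hamApplyVia_take p v u w,
    pairSum_hamApplyAt_take_eq_pairSum_hamApplyVia_drop p u v w,
    pairSum_hamApplyAt_take_eq_pairSum_hamApplyVia_drop p v u w]
  simp only [pairSum_swap hskew v u]
  abel

theorem map_hamApply_of_map_wordProd {D : TensorAlgebra K W →ₗ[K] TensorAlgebra K W}
    {c : List W} (hD : ∀ w, D (wordProd w) = hamApply p c w) (d w : List W) :
    D (hamApply p d w) = pairSum p d w fun j l => hamApply p c (d.splice j w l) := by
  simp only [hamApply_eq_pairSum, map_pairSum, hD]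

end LieHom

theorem ham_is_lie_algebra_hom_general
    (K W : Type*) [Field K] [AddCommGroup W] [Module K W]
    (p : W →ₗ[K] W →ₗ[K] K)
    (hskew : ∀ x y : W, p x y = - p y x)
    (u v : List W)
    (Du Dv Dbr : TensorAlgebra K W →ₗ[K] TensorAlgebra K W)
    (hDu : ∀ w : List W, Du (wordProd w) = hamApply p u w)
    (hDv : ∀ w : List W, Dv (wordProd w) = hamApply p v w)
    -- `Dbr = Ham` of the necklace bracket `{|u|, |v|}`
    (hDbr : ∀ w : List W, Dbr (wordProd w) =
      ∑ i ∈ Finset.range u.length, ∑ j ∈ Finset.range v.length,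
        p (u.getD i 0) (v.getD j 0) •
          hamApply p (v.take j ++ u.drop (i + 1) ++ u.take i ++ v.drop (j + 1)) w) :
    Du ∘ₗ Dv - Dv ∘ₗ Du = Dbr := by
  refine LinearMap.ext_on span_range_wordProd ?_
  rintro _ ⟨w, rfl⟩
  simp only [LinearMap.sub_apply, LinearMap.comp_apply, hDu, hDv, hDbr,
    map_hamApply_of_map_wordProd hDu, map_hamApply_of_map_wordProd hDv]
  exact pairSum_hamApply_splice_sub hskew u v w

theorem ham_is_lie_algebra_hom
    (K W : Type*) [Field K] [CharZero K] [AddCommGroup W] [Module K W]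
    [FiniteDimensional K W]
    (p : W →ₗ[K] W →ₗ[K] K)
    (hskew : ∀ x y : W, p x y = - p y x)
    (u v : List W)
    (Du Dv Dbr : TensorAlgebra K W →ₗ[K] TensorAlgebra K W)
    (hDu : ∀ w : List W, Du (wordProd w) = hamApply p u w)
    (hDv : ∀ w : List W, Dv (wordProd w) = hamApply p v w)
    -- `Dbr = Ham` of the necklace bracket `{|u|, |v|}`
    (hDbr : ∀ w : List W, Dbr (wordProd w) =
      ∑ i ∈ Finset.range u.length, ∑ j ∈ Finset.range v.length,
        p (u.getD i 0) (v.getD j 0) •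
          hamApply p (v.take j ++ u.drop (i + 1) ++ u.take i ++ v.drop (j + 1)) w) :
    Du ∘ₗ Dv - Dv ∘ₗ Du = Dbr :=
  ham_is_lie_algebra_hom_general K W p hskew u v Du Dv Dbr hDu hDv hDbr
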